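/- Let 0 < q < 1, s ∈ ℝ and n ≥ 1. Then H_{n+1}(x,s|q) = x·H_n(x,s|q) - s·{n}_q·q^{n-1}·H_{n-1}(x,s|q) as polynomials in x. -/

import Mathlib

/-- The q-number `{n}_q = 1 + q + ⋯ + q^{n-1}`. -/
noncomputable def qNum (q : ℝ) (n : ℕ) : ℝ := ∑ k ∈ Finset.range n, q ^ k

/-- The q-factorial `{n}_q! = Π_{k=1}^n {k}_q`. -/
noncomputable def qFact (q : ℝ) (n : ℕ) : ℝ := ∏ k ∈ Finset.range n, qNum q (k + 1)

/-- The even q-double factorial `{2k}_q!! = Π_{l=1}^k {2l}_q`. -/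
noncomputable def qDoubleFact (q : ℝ) (k : ℕ) : ℝ := ∏ l ∈ Finset.range k, qNum q (2 * (l + 1))

/-- The q-Hermite polynomial `H_n(x,s|q) = Σ_{k=0}^{⌊n/2⌋} (-1)^k q^{k(k-1)}
({n}_q!/({n-2k}_q!·{2k}_q!!)) s^k x^{n-2k}`. -/
noncomputable def qHermite (q s : ℝ) (n : ℕ) : Polynomial ℝ :=
  ∑ k ∈ Finset.range (n / 2 + 1),
    Polynomial.C ((-1 : ℝ) ^ k * q ^ (k * (k - 1)) *
        (qFact q n / (qFact q (n - 2 * k) * qDoubleFact q k)) * s ^ k) *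
      Polynomial.X ^ (n - 2 * k)

/-- The q-derivative on polynomials: it sends `x^j` to `{j}_q x^{j-1}`. -/
noncomputable def qDeriv (q : ℝ) (f : Polynomial ℝ) : Polynomial ℝ :=
  f.sum fun j a => Polynomial.C (a * qNum q j) * Polynomial.X ^ (j - 1)


/-!
Extend the coefficients of `H_n` by zero beyond `k = ⌊n/2⌋`, so that `H_{n+1}`, `x H_n` and
`H_{n-1}` become sums over one common range of `k`. The recursion then holds term by term: for
the coefficient of `s^{k+1} x^{n-1-2k}` it reduces to `{n+1}_q = {n-2k}_q + q^{n-2k} {2k+2}_q`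
(at the top term `2k + 2 = n + 1` the middle coefficient vanishes).
-/

open Polynomial Finset

lemma qNum_pos {q : ℝ} (hq : 0 < q) {n : ℕ} (hn : n ≠ 0) : 0 < qNum q n :=
  sum_pos (fun k _ => pow_pos hq k) (nonempty_range_iff.mpr hn)

lemma qNum_add (q : ℝ) (a b : ℕ) : qNum q (a + b) = qNum q a + q ^ a * qNum q b := by
  simp only [qNum, sum_range_add, pow_add, mul_sum]

lemma qFact_pos {q : ℝ} (hq : 0 < q) (n : ℕ) : 0 < qFact q n :=
  prod_pos fun _ _ => qNum_pos hq (Nat.succ_ne_zero _)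

lemma qDoubleFact_pos {q : ℝ} (hq : 0 < q) (k : ℕ) : 0 < qDoubleFact q k :=
  prod_pos fun _ _ => qNum_pos hq (by omega)

lemma qFact_succ (q : ℝ) (n : ℕ) : qFact q (n + 1) = qFact q n * qNum q (n + 1) :=
  prod_range_succ _ _

lemma qDoubleFact_succ (q : ℝ) (k : ℕ) :
    qDoubleFact q (k + 1) = qDoubleFact q k * qNum q (2 * k + 2) :=
  prod_range_succ _ _

lemma pow_succ_mul_self {M : Type*} [Monoid M] (a : M) (k : ℕ) :
    a ^ ((k + 1) * k) = a ^ (k * (k - 1)) * a ^ (2 * k) := by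
  rw [← pow_add]
  congr 1
  cases k with
  | zero => rfl
  | succ k => rw [Nat.add_sub_cancel]; ring

noncomputable def qHermiteCoeff (q : ℝ) (n k : ℕ) : ℝ :=
  if 2 * k ≤ n then
    (-1) ^ k * q ^ (k * (k - 1)) * (qFact q n / (qFact q (n - 2 * k) * qDoubleFact q k))
  else 0

section qHermiteCoeff

variable {q : ℝ}

lemma qHermiteCoeff_of_lt {n k : ℕ} (h : n < 2 * k) : qHermiteCoeff q n k = 0 :=
  if_neg (by omega)

lemma qHermiteCoeff_zero (hq : 0 < q) (n : ℕ) : qHermiteCoeff q n 0 = 1 := by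
  simp [qHermiteCoeff, qDoubleFact, (qFact_pos hq n).ne']

lemma qHermiteCoeff_succ_succ_of_lt (hq : 0 < q) {n k : ℕ} (h : 2 * k < n) :
    qHermiteCoeff q (n + 2) (k + 1) =
      qHermiteCoeff q (n + 1) (k + 1) - qNum q (n + 1) * q ^ n * qHermiteCoeff q n k := by
  obtain ⟨d, rfl⟩ : ∃ d, n = d + 1 + 2 * k := ⟨n - 2 * k - 1, by omega⟩
  have hsplit :
      qNum q (d + 1 + 2 * k + 2) = qNum q (d + 1) + q ^ (d + 1) * qNum q (2 * k + 2) := by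
    rw [← qNum_add]; ring_nf
  unfold qHermiteCoeff
  rw [if_pos (by omega), if_pos (by omega), if_pos (by omega),
    show d + 1 + 2 * k + 2 - 2 * (k + 1) = d + 1 by omega,
    show d + 1 + 2 * k + 1 - 2 * (k + 1) = d by omega,
    show d + 1 + 2 * k - 2 * k = d + 1 by omega, Nat.add_sub_cancel, pow_succ_mul_self,
    qFact_succ, qFact_succ, qFact_succ, qDoubleFact_succ, hsplit]
  have := (qFact_pos hq d).ne'
  have := (qDoubleFact_pos hq k).ne'
  have := (qNum_pos hq (n := d + 1) (by omega)).ne'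
  have := (qNum_pos hq (n := 2 * k + 2) (by omega)).ne'
  have := (qNum_pos hq (n := d + 1 + 2 * k + 1) (by omega)).ne'
  field_simp
  ring

lemma qHermiteCoeff_succ_succ_self (hq : 0 < q) (k : ℕ) :
    qHermiteCoeff q (2 * k + 2) (k + 1) =
      -(qNum q (2 * k + 1) * q ^ (2 * k) * qHermiteCoeff q (2 * k) k) := by
  unfold qHermiteCoeff
  rw [if_pos (by omega), if_pos le_rfl, show 2 * k + 2 - 2 * (k + 1) = 0 by omega, Nat.sub_self,
    Nat.add_sub_cancel, pow_succ_mul_self, qFact_succ, qFact_succ, qDoubleFact_succ]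
  have := (qDoubleFact_pos hq k).ne'
  have := (qNum_pos hq (n := 2 * k + 1 + 1) (by omega)).ne'
  field_simp
  ring

lemma qHermiteCoeff_succ_succ (hq : 0 < q) (n k : ℕ) :
    qHermiteCoeff q (n + 2) (k + 1) =
      qHermiteCoeff q (n + 1) (k + 1) - qNum q (n + 1) * q ^ n * qHermiteCoeff q n k := by
  rcases lt_trichotomy (2 * k) n with h | rfl | h
  · exact qHermiteCoeff_succ_succ_of_lt hq h
  · rw [qHermiteCoeff_succ_succ_self hq, qHermiteCoeff_of_lt (k := k + 1) (by omega), zero_sub]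
  · rw [qHermiteCoeff_of_lt (by omega : n + 2 < 2 * (k + 1)),
      qHermiteCoeff_of_lt (by omega : n + 1 < 2 * (k + 1)), qHermiteCoeff_of_lt h]
    ring

end qHermiteCoeff

section qHermiteTerm

variable (q s : ℝ)

noncomputable def qHermiteTerm (n k : ℕ) : ℝ[X] :=
  C (qHermiteCoeff q n k * s ^ k) * X ^ (n - 2 * k)

lemma qHermite_eq_sum_qHermiteTerm {n M : ℕ} (hM : n < 2 * M) :
    qHermite q s n = ∑ k ∈ range M, qHermiteTerm q s n k := by
  refine sum_subset_zero_on_sdiff (range_subset_range.mpr (by omega)) ?_ ?_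
  · intro k hk
    simp only [mem_sdiff, mem_range] at hk
    simp [qHermiteTerm, qHermiteCoeff_of_lt (q := q) (by omega : n < 2 * k)]
  · intro k hk
    rw [mem_range] at hk
    simp only [qHermiteTerm, qHermiteCoeff, if_pos (by omega : 2 * k ≤ n)]

lemma X_mul_qHermiteTerm (n k : ℕ) :
    X * qHermiteTerm q s n k = C (qHermiteCoeff q n k * s ^ k) * X ^ (n + 1 - 2 * k) := by
  rcases le_or_gt (2 * k) n with h | h
  · rw [qHermiteTerm, Nat.sub_add_comm h, pow_succ]
    ring
  · simp [qHermiteTerm, qHermiteCoeff_of_lt h]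

variable {q}

lemma qHermiteTerm_succ_zero (hq : 0 < q) (n : ℕ) :
    qHermiteTerm q s (n + 1) 0 = X * qHermiteTerm q s n 0 := by
  rw [X_mul_qHermiteTerm, qHermiteTerm, qHermiteCoeff_zero hq, qHermiteCoeff_zero hq]

lemma qHermiteTerm_succ_succ (hq : 0 < q) (n k : ℕ) :
    qHermiteTerm q s (n + 2) (k + 1) =
      X * qHermiteTerm q s (n + 1) (k + 1) -
        C (s * qNum q (n + 1) * q ^ n) * qHermiteTerm q s n k := by
  rw [X_mul_qHermiteTerm, qHermiteTerm, qHermiteTerm, qHermiteCoeff_succ_succ hq,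
    show n - 2 * k = n + 1 + 1 - 2 * (k + 1) by omega]
  simp only [map_sub, map_mul, map_pow]
  ring

end qHermiteTerm

theorem qHermite_recursion_general (q : ℝ) (hq0 : 0 < q) (s : ℝ) (n : ℕ) (hn : 1 ≤ n) :
    qHermite q s (n + 1) =
      Polynomial.X * qHermite q s n -
        Polynomial.C (s * qNum q n * q ^ (n - 1)) * qHermite q s (n - 1) := by
  obtain ⟨n, rfl⟩ := Nat.exists_eq_add_of_le' hn
  rw [Nat.add_sub_cancel, qHermite_eq_sum_qHermiteTerm q s (M := n + 3) (by omega),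
    qHermite_eq_sum_qHermiteTerm q s (M := n + 3) (by omega),
    qHermite_eq_sum_qHermiteTerm q s (M := n + 2) (by omega), sum_range_succ',
    sum_range_succ' _ (n + 2)]
  simp only [qHermiteTerm_succ_succ s hq0, qHermiteTerm_succ_zero s hq0, sum_sub_distrib, mul_add,
    mul_sum]
  ring

/-- Three-term recursion: `H_{n+1}(x,s|q) = x·H_n(x,s|q) - s·{n}_q·q^{n-1}·H_{n-1}(x,s|q)`. -/
theorem qHermite_recursion (q : ℝ) (hq0 : 0 < q) (hq1 : q < 1) (s : ℝ) (n : ℕ) (hn : 1 ≤ n) :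
    qHermite q s (n + 1) =
      Polynomial.X * qHermite q s n -
        Polynomial.C (s * qNum q n * q ^ (n - 1)) * qHermite q s (n - 1) :=
  qHermite_recursion_general q hq0 s n hn
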